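/- For a binary quartic form p(x,y) = Σ_{i=0}^4 C(4,i)·b_i·x^{4-i}y^i with real coefficients b_0,…,b_4, p belongs to the dual cone (Σ_{2,4}^2)* if and only if b_0 ≥ 0, b_2 ≥ 0, b_4 ≥ 0, b_0·b_2 ≥ b_1², b_0·b_4 ≥ b_2², and b_2·b_4 ≥ b_3². -/

import Mathlib

open MvPolynomial Finset

/-!
Write `h = a x² + c xy + e y²`. The Fischer weight of `x^(4-j) y^j` is `1 / C(4,j)`, which cancels
the binomial coefficients of `p`, so `[p, h²] = b₀a² + 2b₁ac + b₂(c² + 2ae) + 2b₃ce + b₄e²`.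
A binary quadratic has at most two terms iff one of `a, c, e` vanishes, and on each of these three
coordinate planes the pairing is a binary quadratic form in the two remaining variables, nonnegative
iff its `2 × 2` Gram matrix is positive semidefinite.
-/

/-- The Fischer inner product of two binary quartic forms (`n = 2`, `2d = 4`). -/
noncomputable def fischer4 (p q : MvPolynomial (Fin 2) ℝ) : ℝ :=
  ∑ i ∈ p.support ∪ q.support,
    (((∏ j, Nat.factorial (i j) : ℕ) : ℝ) / (Nat.factorial 4 : ℝ)) *
      coeff i p * coeff i q

noncomputable def binaryExponent (n j : ℕ) : Fin 2 →₀ ℕ :=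
  Finsupp.single 0 (n - j) + Finsupp.single 1 j

@[simp]
lemma binaryExponent_apply_zero (n j : ℕ) : binaryExponent n j 0 = n - j := by
  simp [binaryExponent]

@[simp]
lemma binaryExponent_apply_one (n j : ℕ) : binaryExponent n j 1 = j := by
  simp [binaryExponent]

lemma binaryExponent_injective (n : ℕ) : Function.Injective (binaryExponent n) :=
  fun i j h => by simpa using DFunLike.congr_fun h 1

noncomputable def binaryExponentEmbedding (n : ℕ) : Fin (n + 1) ↪ (Fin 2 →₀ ℕ) :=
  ⟨fun j => binaryExponent n j, (binaryExponent_injective n).comp Fin.val_injective⟩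

lemma degree_binaryExponent {n j : ℕ} (hj : j ≤ n) : (binaryExponent n j).degree = n := by
  rw [Finsupp.degree_eq_sum, Fin.sum_univ_two]
  simp only [binaryExponent_apply_zero, binaryExponent_apply_one]
  omega

lemma exists_eq_binaryExponent {n : ℕ} {d : Fin 2 →₀ ℕ} (hd : d.degree = n) :
    ∃ j : Fin (n + 1), d = binaryExponent n j := by
  rw [Finsupp.degree_eq_sum, Fin.sum_univ_two] at hd
  refine ⟨⟨d 1, by omega⟩, ?_⟩
  ext i
  fin_cases i <;> simp; omega

lemma monomial_binaryExponent {R : Type*} [CommSemiring R] (n j : ℕ) (r : R) :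
    monomial (binaryExponent n j) r = C r * X 0 ^ (n - j) * X 1 ^ j := by
  simp [binaryExponent, X_pow_eq_monomial, C_mul_monomial, monomial_mul]

section BinaryForm

variable {R : Type*} [CommSemiring R]

noncomputable def binaryForm (n : ℕ) (f : Fin (n + 1) → R) : MvPolynomial (Fin 2) R :=
  ∑ j : Fin (n + 1), monomial (binaryExponent n j) (f j)

lemma isHomogeneous_binaryForm (n : ℕ) (f : Fin (n + 1) → R) :
    (binaryForm n f).IsHomogeneous n :=
  IsHomogeneous.sum _ _ _ fun j _ =>
    isHomogeneous_monomial _ (degree_binaryExponent (Nat.lt_succ_iff.1 j.isLt))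

lemma coeff_binaryForm (n : ℕ) (f : Fin (n + 1) → R) (j : Fin (n + 1)) :
    coeff (binaryExponent n j) (binaryForm n f) = f j := by
  simp [binaryForm, coeff_sum, coeff_monomial, (binaryExponent_injective n).eq_iff, Fin.val_inj]

lemma mem_support_binaryForm {n : ℕ} {f : Fin (n + 1) → R} {d : Fin 2 →₀ ℕ} :
    d ∈ (binaryForm n f).support ↔ ∃ j : Fin (n + 1), binaryExponent n j = d ∧ f j ≠ 0 := by
  constructor
  · intro hd
    by_cases hdeg : d.degree = n
    · obtain ⟨j, rfl⟩ := exists_eq_binaryExponent hdeg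
      exact ⟨j, rfl, by rwa [mem_support_iff, coeff_binaryForm] at hd⟩
    · exact absurd ((isHomogeneous_binaryForm n f).coeff_eq_zero hdeg) (mem_support_iff.1 hd)
  · rintro ⟨j, rfl, hj⟩
    rwa [mem_support_iff, coeff_binaryForm]

lemma card_support_binaryForm_le_iff (n : ℕ) (f : Fin (n + 1) → R) :
    #(binaryForm n f).support ≤ n ↔ ∃ j, f j = 0 := by
  classical
  have hsupp : (binaryForm n f).support =
      (univ.filter (f · ≠ 0)).map (binaryExponentEmbedding n) := by
    ext d
    rw [mem_support_binaryForm]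
    simp [binaryExponentEmbedding, and_comm]
  have hlt := card_lt_iff_ne_univ (univ.filter (f · ≠ 0))
  rw [Fintype.card_fin] at hlt
  rw [hsupp, card_map, ← Nat.lt_succ_iff, hlt]
  simp [Finset.filter_eq_self]

lemma MvPolynomial.IsHomogeneous.eq_binaryForm {n : ℕ} {φ : MvPolynomial (Fin 2) R}
    (hφ : φ.IsHomogeneous n) :
    φ = binaryForm n fun j => coeff (binaryExponent n j) φ := by
  ext d
  by_cases hd : d.degree = n
  · obtain ⟨j, rfl⟩ := exists_eq_binaryExponent hd
    rw [coeff_binaryForm]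
  · rw [hφ.coeff_eq_zero hd, (isHomogeneous_binaryForm n _).coeff_eq_zero hd]

lemma binaryForm_two_sq (a c e : R) :
    binaryForm 2 ![a, c, e] ^ 2 =
      binaryForm 4 ![a ^ 2, 2 * a * c, c ^ 2 + 2 * a * e, 2 * c * e, e ^ 2] := by
  simp only [binaryForm, Fin.sum_univ_succ, Fin.sum_univ_zero, monomial_binaryExponent,
    Matrix.cons_val_zero, Matrix.cons_val_succ, Fin.val_zero, Fin.val_succ, C_add, C_mul, C_pow,
    map_ofNat]
  ring

end BinaryForm

lemma fischer4_binaryForm_choose_mul (f g : Fin 5 → ℝ) :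
    fischer4 (binaryForm 4 fun j => (Nat.choose 4 j : ℝ) * f j) (binaryForm 4 g) =
      ∑ j, f j * g j := by
  set e := binaryExponentEmbedding 4
  set f' : Fin 5 → ℝ := fun j => (Nat.choose 4 j : ℝ) * f j
  have hsub : (binaryForm 4 f').support ∪ (binaryForm 4 g).support ⊆ univ.map e := by
    intro d hd
    rcases mem_union.1 hd with hd | hd <;>
      obtain ⟨j, rfl, -⟩ := mem_support_binaryForm.1 hd <;> exact mem_map_of_mem e (mem_univ j)
  rw [fischer4, sum_subset hsub, sum_map]
  · refine sum_congr rfl fun j _ => ?_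
    have hj : (j : ℕ) ≤ 4 := Nat.lt_succ_iff.1 j.isLt
    simp only [e, f', binaryExponentEmbedding, Function.Embedding.coeFn_mk, coeff_binaryForm,
      Fin.prod_univ_two, binaryExponent_apply_zero, binaryExponent_apply_one,
      Nat.cast_choose ℝ hj]
    push_cast
    field_simp
  · intro d _ hd
    rw [notMem_union, notMem_support_iff, notMem_support_iff] at hd
    rw [hd.1, mul_zero, zero_mul]

lemma fischer4_binaryQuartic_sq (b : Fin 5 → ℝ) (a c e : ℝ) :
    fischer4 (binaryForm 4 fun j => (Nat.choose 4 j : ℝ) * b j) (binaryForm 2 ![a, c, e] ^ 2) =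
      b 0 * a ^ 2 + 2 * b 1 * a * c + b 2 * (c ^ 2 + 2 * a * e) + 2 * b 3 * c * e +
        b 4 * e ^ 2 := by
  rw [binaryForm_two_sq, fischer4_binaryForm_choose_mul, Fin.sum_univ_five]
  simp only [Matrix.cons_val_zero, Matrix.cons_val_one, Matrix.cons_val]
  ring

lemma quadratic_nonneg_iff {u v w : ℝ} :
    (∀ x y : ℝ, 0 ≤ u * x ^ 2 + 2 * v * x * y + w * y ^ 2) ↔ 0 ≤ u ∧ 0 ≤ w ∧ v ^ 2 ≤ u * w := by
  constructor
  · intro H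
    have hdisc : discrim w (2 * v) u ≤ 0 :=
      discrim_le_zero fun y => (H 1 y).trans_eq (by ring)
    refine ⟨by simpa using H 1 0, by simpa using H 0 1, ?_⟩
    rw [discrim] at hdisc
    linarith
  · rintro ⟨hu, hw, hv⟩ x y
    rcases hu.eq_or_lt with rfl | hu
    · obtain rfl : v = 0 := by nlinarith [sq_nonneg v]
      nlinarith [mul_nonneg hw (sq_nonneg y)]
    · nlinarith [sq_nonneg (u * x + v * y), mul_nonneg (sub_nonneg.mpr hv) (sq_nonneg y)]

lemma nonneg_on_coordinate_planes_iff (b : Fin 5 → ℝ) :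
    (∀ a c e : ℝ, (a = 0 ∨ c = 0 ∨ e = 0) →
      0 ≤ b 0 * a ^ 2 + 2 * b 1 * a * c + b 2 * (c ^ 2 + 2 * a * e) + 2 * b 3 * c * e +
        b 4 * e ^ 2) ↔
    (0 ≤ b 0 ∧ 0 ≤ b 2 ∧ 0 ≤ b 4 ∧
      b 1 ^ 2 ≤ b 0 * b 2 ∧ b 2 ^ 2 ≤ b 0 * b 4 ∧ b 3 ^ 2 ≤ b 2 * b 4) := by
  have h01 := @quadratic_nonneg_iff (b 0) (b 1) (b 2)
  have h02 := @quadratic_nonneg_iff (b 0) (b 2) (b 4)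
  have h23 := @quadratic_nonneg_iff (b 2) (b 3) (b 4)
  constructor
  · intro H
    obtain ⟨hb0, hb2, h12⟩ := h01.1 fun x y => by linarith [H x y 0 (by simp)]
    obtain ⟨-, hb4, h24⟩ := h02.1 fun x y => by linarith [H x 0 y (by simp)]
    obtain ⟨-, -, h34⟩ := h23.1 fun x y => by linarith [H 0 x y (by simp)]
    exact ⟨hb0, hb2, hb4, h12, h24, h34⟩
  · rintro ⟨hb0, hb2, hb4, h12, h24, h34⟩ a c e (rfl | rfl | rfl)
    · linarith [h23.2 ⟨hb2, hb4, h34⟩ c e]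
    · linarith [h02.2 ⟨hb0, hb4, h24⟩ a e]
    · linarith [h01.2 ⟨hb0, hb2, h12⟩ a c]

theorem binary_quartic_dual_sigma_two (b : Fin 5 → ℝ)
    (p : MvPolynomial (Fin 2) ℝ)
    (hp : p = ∑ i : Fin 5,
      C ((Nat.choose 4 (i : ℕ) : ℝ) * b i) * X 0 ^ (4 - (i : ℕ)) * X 1 ^ (i : ℕ)) :
    (∀ h : MvPolynomial (Fin 2) ℝ, h.IsHomogeneous 2 → h.support.card ≤ 2 →
        0 ≤ fischer4 p (h ^ 2)) ↔
    (0 ≤ b 0 ∧ 0 ≤ b 2 ∧ 0 ≤ b 4 ∧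
      b 1 ^ 2 ≤ b 0 * b 2 ∧ b 2 ^ 2 ≤ b 0 * b 4 ∧ b 3 ^ 2 ≤ b 2 * b 4) := by
  have hp' : p = binaryForm 4 fun j => (Nat.choose 4 j : ℝ) * b j := by
    simp only [hp, binaryForm, monomial_binaryExponent]
  rw [← nonneg_on_coordinate_planes_iff, hp']
  constructor
  · intro H a c e hace
    rw [← fischer4_binaryQuartic_sq]
    refine H _ (isHomogeneous_binaryForm 2 _) ((card_support_binaryForm_le_iff 2 _).2 ?_)
    rcases hace with rfl | rfl | rfl
    exacts [⟨0, rfl⟩, ⟨1, rfl⟩, ⟨2, rfl⟩]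
  · intro H h hh hcard
    obtain ⟨a, c, e, rfl⟩ : ∃ a c e, h = binaryForm 2 ![a, c, e] :=
      ⟨_, _, _, hh.eq_binaryForm.trans (congrArg _ (FinVec.etaExpand_eq _).symm)⟩
    obtain ⟨j, hj⟩ := (card_support_binaryForm_le_iff 2 _).1 hcard
    rw [fischer4_binaryQuartic_sq]
    apply H
    fin_cases j <;> simp_all
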